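/- arXiv:2505.12699 — 8 statements merged into one kernel-verified Lean document; each statement's English description precedes it below -/
import Mathlib

section
/- Suppose every OWA vector λ^v is nonnegative and non-increasing. Then the total score function sco is monotone and submodular on subsets of C: if S ⊆ S' ⊆ C then sco(S) ≤ sco(S'), and for every S ⊆ C and all distinct x, y ∈ C \ S, sco(S ∪ {x}) + sco(S ∪ {y}) ≥ sco(S ∪ {x, y}) + sco(S). -/
/-!
Each voter's contribution is `f (#(A v ∩ S))` with `f k = ∑_{j=1}^k λ^v_j`. Nonnegative weights
make `f` monotone, non-increasing weights make it discretely concave, and composing a concave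
function with the modular count `S ↦ #(A v ∩ S)` gives a submodular set function.
-/

open Finset

/-- The score of a committee `S`: each voter `v` (with approval set `A v` and
OWA vector `lam v`) contributes `∑_{j=1}^{|A v ∩ S|} lam v j`. -/
def sco {C V : Type*} [Fintype V] [DecidableEq C]
    (A : V → Finset C) (lam : V → ℕ → ℚ) (S : Finset C) : ℚ :=
  ∑ v : V, ∑ j ∈ Finset.Icc 1 ((A v ∩ S).card), lam v j

section PartialSums

variable {α : Type*} [AddCommMonoid α] [PartialOrder α] [IsOrderedAddMonoid α]

lemma monotone_sum_Icc_one {w : ℕ → α} (hw : ∀ j, 1 ≤ j → 0 ≤ w j) :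
    Monotone fun k => ∑ j ∈ Icc 1 k, w j :=
  monotone_nat_of_le_succ fun k => by
    rw [sum_Icc_succ_top (Nat.le_add_left 1 k)]
    exact le_add_of_nonneg_right (hw (k + 1) (Nat.le_add_left 1 k))

lemma sum_Icc_one_add_two_add_le {w : ℕ → α} {n : ℕ} (hw : w (n + 2) ≤ w (n + 1)) :
    ∑ j ∈ Icc 1 (n + 2), w j + ∑ j ∈ Icc 1 n, w j ≤
      ∑ j ∈ Icc 1 (n + 1), w j + ∑ j ∈ Icc 1 (n + 1), w j := by
  rw [sum_Icc_succ_top (by omega : 1 ≤ n + 2), sum_Icc_succ_top (by omega : 1 ≤ n + 1)]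
  calc ∑ j ∈ Icc 1 n, w j + w (n + 1) + w (n + 2) + ∑ j ∈ Icc 1 n, w j
      = ∑ j ∈ Icc 1 n, w j + w (n + 1) + (∑ j ∈ Icc 1 n, w j + w (n + 2)) := by abel
    _ ≤ ∑ j ∈ Icc 1 n, w j + w (n + 1) + (∑ j ∈ Icc 1 n, w j + w (n + 1)) := by gcongr

end PartialSums

lemma card_inter_insert_of_notMem {C : Type*} [DecidableEq C] (s : Finset C) {t : Finset C}
    {x : C} (hx : x ∉ t) :
    #(s ∩ insert x t) = #(s ∩ t) + if x ∈ s then 1 else 0 := by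
  by_cases hxs : x ∈ s
  · rw [inter_insert_of_mem hxs, card_insert_of_notMem (fun h => hx (mem_inter.1 h).2), if_pos hxs]
  · rw [inter_insert_of_notMem hxs, if_neg hxs, Nat.add_zero]

lemma card_inter_submodular {C α : Type*} [DecidableEq C] [AddCommMonoid α] [Preorder α]
    {f : ℕ → α} (hf : ∀ n, f (n + 2) + f n ≤ f (n + 1) + f (n + 1)) (s : Finset C)
    {t : Finset C} {x y : C} (hxy : x ≠ y) (hx : x ∉ t) (hy : y ∉ t) :
    f #(s ∩ insert x (insert y t)) + f #(s ∩ t) ≤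
      f #(s ∩ insert x t) + f #(s ∩ insert y t) := by
  have hx' : x ∉ insert y t := by simp [hx, hxy]
  rw [card_inter_insert_of_notMem s hx', card_inter_insert_of_notMem s hy,
    card_inter_insert_of_notMem s hx]
  by_cases hxs : x ∈ s <;> by_cases hys : y ∈ s <;>
    simp only [hxs, hys, if_true, if_false, Nat.add_zero]
  · exact hf #(s ∩ t)
  · exact le_rfl
  · exact le_of_eq (add_comm _ _)
  · exact le_rfl

/-- If every OWA vector is nonnegative and non-increasing, then the total score
function is monotone and submodular on subsets of the candidate set. -/
theorem stmt_1 {C V : Type*} [Fintype V] [DecidableEq C]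
    (A : V → Finset C) (lam : V → ℕ → ℚ)
    (hnonneg : ∀ (v : V) (j : ℕ), 1 ≤ j → 0 ≤ lam v j)
    (hmono : ∀ (v : V) (j : ℕ), 1 ≤ j → lam v (j + 1) ≤ lam v j) :
    (∀ S S' : Finset C, S ⊆ S' → sco A lam S ≤ sco A lam S') ∧
      (∀ (S : Finset C) (x y : C), x ≠ y → x ∉ S → y ∉ S →
        sco A lam (insert x S) + sco A lam (insert y S) ≥
          sco A lam (insert x (insert y S)) + sco A lam S) := by
  refine ⟨fun S S' hS => sum_le_sum fun v _ =>
    monotone_sum_Icc_one (hnonneg v) (card_le_card (inter_subset_inter_left hS)), ?_⟩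
  intro S x y hxy hx hy
  simp only [sco, ge_iff_le, ← sum_add_distrib]
  refine sum_le_sum fun v _ => card_inter_submodular (f := fun k => ∑ j ∈ Icc 1 k, lam v j)
    (fun n => ?_) (A v) hxy hx hy
  exact sum_Icc_one_add_two_add_le (hmono v (n + 1) (Nat.le_add_left 1 n))
end

section
/- Suppose every OWA vector λ^v is nonnegative and non-increasing. Let T ⊆ C be a sunflower, let S ⊆ C be a committee, let u ∈ S ∩ T, and let w ∈ T \ S be such that the petal of w contains no voter approving any member of S (i.e. (N(w) \ Co(T)) ∩ N(S) = ∅) and sco({w}) ≥ sco({u}). Then sco((S \ {u}) ∪ {w}) ≥ sco(S). -/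
open Finset

/-- `Nc A c` is the set of voters approving candidate `c`. -/
def Nc {C V : Type*} [Fintype V] [DecidableEq C] (A : V → Finset C) (c : C) : Finset V :=
  Finset.univ.filter fun v => c ∈ A v

/-- `Ns A S` is the set of voters approving at least one member of `S`. -/
def Ns {C V : Type*} [Fintype V] [DecidableEq C] (A : V → Finset C) (S : Finset C) : Finset V :=
  Finset.univ.filter fun v => (A v ∩ S).Nonempty

lemma lam_anti {V : Type*} (lam : V → ℕ → ℚ)
    (hmono : ∀ (v : V) (j : ℕ), 1 ≤ j → lam v (j + 1) ≤ lam v j)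
    (v : V) : ∀ j k, 1 ≤ j → j ≤ k → lam v k ≤ lam v j := by
  intro j k h1 hjk
  induction k with
  | zero => omega
  | succ k ih =>
    rcases Nat.lt_or_ge j (k+1) with h | h
    · exact le_trans (hmono v k (by omega)) (ih (by omega))
    · have : j = k + 1 := by omega
      simp [this]

set_option maxHeartbeats 1600000 in
/-- Sunflower swap: if `T` is a sunflower with core `Co`, `u ∈ S ∩ T`, `w ∈ T \ S`,
the petal of `w` meets no voter approving a member of `S`, and `sco {w} ≥ sco {u}`,
then swapping `u` for `w` does not decrease the score. -/
theorem stmt_2 {C V : Type*} [Fintype V] [DecidableEq C] [DecidableEq V]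
    (A : V → Finset C) (lam : V → ℕ → ℚ)
    (hnonneg : ∀ (v : V) (j : ℕ), 1 ≤ j → 0 ≤ lam v j)
    (hmono : ∀ (v : V) (j : ℕ), 1 ≤ j → lam v (j + 1) ≤ lam v j)
    (T S : Finset C) (Co : Finset V)
    (hsun : ∀ x ∈ T, ∀ x' ∈ T, x ≠ x' → Nc A x ∩ Nc A x' = Co)
    (u w : C) (huS : u ∈ S) (huT : u ∈ T) (hwT : w ∈ T) (hwS : w ∉ S)
    (hpetal : (Nc A w \ Co) ∩ Ns A S = ∅)
    (hscore : sco A lam {u} ≤ sco A lam {w}) :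
    sco A lam S ≤ sco A lam (insert w (S.erase u)) := by
  have huw : u ≠ w := fun h => hwS (h ▸ huS)
  have hCo : Nc A u ∩ Nc A w = Co := hsun u huT w hwT huw
  set S' := insert w (S.erase u) with hS'
  clear_value S'
  have hsingle : ∀ c : C, sco A lam {c} = ∑ v : V, (if c ∈ A v then lam v 1 else 0) := by
    intro c
    unfold sco
    refine Finset.sum_congr rfl fun v _ => ?_
    by_cases h : c ∈ A v
    · have h1 : A v ∩ {c} = {c} := by
        rw [Finset.inter_comm, Finset.singleton_inter_of_mem h]
      rw [h1]
      simp [h]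
    · have h1 : A v ∩ {c} = ∅ := by
        rw [Finset.inter_comm, Finset.singleton_inter_of_notMem h]
      rw [h1]
      simp [h]
  have key : ∀ v : V,
      (if w ∈ A v then lam v 1 else 0) + ∑ j ∈ Finset.Icc 1 ((A v ∩ S).card), lam v j
      ≤ (if u ∈ A v then lam v 1 else 0) + ∑ j ∈ Finset.Icc 1 ((A v ∩ S').card), lam v j := by
    intro v
    have hins : A v ∩ S' = if w ∈ A v then insert w ((A v ∩ S).erase u)
        else (A v ∩ S).erase u := by
      have h0 : A v ∩ S' = if w ∈ A v then insert w (A v ∩ S.erase u)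
          else A v ∩ S.erase u := by
        rw [hS', Finset.inter_comm]
        by_cases hw : w ∈ A v
        · rw [Finset.insert_inter_of_mem hw, if_pos hw, Finset.inter_comm]
        · rw [Finset.insert_inter_of_notMem hw, if_neg hw, Finset.inter_comm]
      rw [h0, Finset.inter_erase]
    by_cases hw : w ∈ A v <;> by_cases hu : u ∈ A v
    · -- both: v ∈ Co
      have huAS : u ∈ A v ∩ S := Finset.mem_inter.2 ⟨hu, huS⟩
      have hwn : w ∉ (A v ∩ S).erase u := fun h =>
        hwS (Finset.mem_inter.1 (Finset.mem_of_mem_erase h)).2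
      have hcard : (A v ∩ S').card = (A v ∩ S).card := by
        rw [hins, if_pos hw, Finset.card_insert_of_notMem hwn,
          Finset.card_erase_of_mem huAS]
        have : 1 ≤ (A v ∩ S).card := Finset.card_pos.2 ⟨u, huAS⟩
        omega
      simp [hw, hu, hcard]
    · -- w only: petal ⇒ A v ∩ S = ∅
      have hvN : v ∈ Nc A w \ Co := by
        refine Finset.mem_sdiff.2 ⟨?_, fun h => hu ?_⟩
        · simp [Nc, hw]
        · have := hCo ▸ h
          have := (Finset.mem_inter.1 this).1
          simpa [Nc] using this
      have hvNs : v ∉ Ns A S := by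
        intro h
        have : v ∈ (Nc A w \ Co) ∩ Ns A S := Finset.mem_inter.2 ⟨hvN, h⟩
        rw [hpetal] at this
        exact absurd this (Finset.notMem_empty v)
      have hAS : A v ∩ S = ∅ := by
        by_contra h
        exact hvNs (by simp [Ns, Finset.nonempty_iff_ne_empty, h])
      have hcard : (A v ∩ S').card = 1 := by
        rw [hins, if_pos hw, hAS]
        simp
      simp [hw, hu, hcard, hAS]
    · -- u only
      have huAS : u ∈ A v ∩ S := Finset.mem_inter.2 ⟨hu, huS⟩
      have hk : 1 ≤ (A v ∩ S).card := Finset.card_pos.2 ⟨u, huAS⟩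
      have hcard : (A v ∩ S').card = (A v ∩ S).card - 1 := by
        rw [hins, if_neg hw, Finset.card_erase_of_mem huAS]
      rw [hcard]
      simp only [if_neg hw, if_pos hu, zero_add]
      have hsucc : (A v ∩ S).card - 1 + 1 = (A v ∩ S).card := by omega
      have := Finset.sum_Icc_succ_top (a := 1) (b := (A v ∩ S).card - 1)
        (by omega) (lam v)
      rw [hsucc] at this
      rw [this, add_comm]
      exact add_le_add (lam_anti lam hmono v 1 (A v ∩ S).card le_rfl hk) le_rfl
    · -- neither
      have hcard : (A v ∩ S').card = (A v ∩ S).card := by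
        rw [hins, if_neg hw, Finset.erase_eq_of_notMem
          (fun h => hu (Finset.mem_inter.1 h).1)]
      simp [hw, hu, hcard]
  have hsum := Finset.sum_le_sum (fun v (_ : v ∈ Finset.univ) => key v)
  rw [Finset.sum_add_distrib, Finset.sum_add_distrib] at hsum
  rw [← hsingle w, ← hsingle u] at hsum
  have : sco A lam S = ∑ v : V, ∑ j ∈ Finset.Icc 1 ((A v ∩ S).card), lam v j := rfl
  have h2 : sco A lam S' = ∑ v : V, ∑ j ∈ Finset.Icc 1 ((A v ∩ S').card), lam v j := rfl
  rw [← this, ← h2] at hsum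
  linarith
end

section
/- Suppose every OWA vector λ^v is nonnegative and non-increasing, let k, W ∈ ℕ, and suppose |N(c)| ≤ W for every candidate c ∈ C. Let T ⊆ C be a sunflower with |T| ≥ Wk + 1, and let u ∈ T have minimum singleton score sco({u}) among the elements of T. Then for every rational t: there exists S ⊆ C with |S| ≤ k and sco(S) ≥ t if and only if there exists S' ⊆ C \ {u} with |S'| ≤ k and sco(S') ≥ t. (For S' ⊆ C \ {u}, the score of S' in the profile obtained by deleting candidate u equals sco(S').) -/
/-!
Let `S ∋ u` be a committee of size at most `k`. The petals of the sunflower `T` are pairwise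
disjoint, so the at most `W · |S \ T|` voters approving a candidate of `S \ T` meet at most that
many petals; together with `S ∩ T` this excludes at most `W · |S| ≤ W k < |T|` elements of `T`,
leaving some `x ∈ T \ S` whose petal voters approve nothing in `S \ {u}`. In the swap
`S ↦ S - u + x` a petal voter of `x` gains exactly `λ₁`, a petal voter of `u` loses at most
`λ₁` (the OWA vectors are non-increasing), and core voters are unaffected. Hence
`sco(S) + sco({x}) ≤ sco(S - u + x) + sco({u})`, and `sco({u}) ≤ sco({x})` finishes the proof.
-/

open Finset

section OWA

variable {l : ℕ → ℚ}

lemma apply_succ_le_apply_one (hmono : ∀ j, 1 ≤ j → l (j + 1) ≤ l j) :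
    ∀ n, l (n + 1) ≤ l 1
  | 0 => le_rfl
  | n + 1 => (hmono (n + 1) (by omega)).trans (apply_succ_le_apply_one hmono n)

lemma sum_Icc_one_succ_le (hmono : ∀ j, 1 ≤ j → l (j + 1) ≤ l j) (n : ℕ) :
    ∑ j ∈ Icc 1 (n + 1), l j ≤ ∑ j ∈ Icc 1 n, l j + l 1 := by
  rw [sum_Icc_succ_top (by omega)]
  exact add_le_add_right (apply_succ_le_apply_one hmono n) _

/-- One voter's share of the swap `S ↦ S - u + x`, with `m = |A ∩ (S \ {u})|`,
`p` standing for `u ∈ A` and `q` for `x ∈ A`. -/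
lemma owa_exchange (hmono : ∀ j, 1 ≤ j → l (j + 1) ≤ l j) (m : ℕ) (p q : Prop)
    [Decidable p] [Decidable q] (h : q → ¬p → m = 0) :
    ∑ j ∈ Icc 1 (m + if p then 1 else 0), l j + (if q then l 1 else 0) ≤
      ∑ j ∈ Icc 1 (m + if q then 1 else 0), l j + (if p then l 1 else 0) := by
  split_ifs with hp hq hq
  · exact le_rfl
  · simpa using sum_Icc_one_succ_le hmono m
  · obtain rfl := h hq hp
    simp
  · exact le_rfl

end OWA

lemma card_inter_insert {α : Type*} [DecidableEq α] (A s : Finset α) {a : α} (ha : a ∉ s) :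
    (A ∩ insert a s).card = (A ∩ s).card + if a ∈ A then 1 else 0 := by
  split_ifs with h
  · rw [inter_insert_of_mem h, card_insert_of_notMem (fun h' => ha (mem_inter.1 h').2)]
  · rw [inter_insert_of_notMem h, add_zero]

section Score

variable {C V : Type*} [Fintype V] [DecidableEq C] (A : V → Finset C) (lam : V → ℕ → ℚ)

lemma sco_singleton (c : C) : sco A lam {c} = ∑ v, if c ∈ A v then lam v 1 else 0 := by
  refine sum_congr rfl fun v _ => ?_
  rw [← insert_empty, card_inter_insert _ _ (notMem_empty c)]
  split_ifs <;> simp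

lemma sco_erase_of_Nc_eq_empty {u : C} (hu : Nc A u = ∅) (S : Finset C) :
    sco A lam (S.erase u) = sco A lam S := by
  refine sum_congr rfl fun v _ => ?_
  have huv : u ∉ A v := fun h => notMem_empty v (hu ▸ mem_filter.2 ⟨mem_univ v, h⟩)
  rw [inter_erase, erase_eq_of_notMem fun h => huv (mem_inter.1 h).1]

theorem sco_add_le_sco_insert_erase [DecidableEq V]
    (hmono : ∀ v j, 1 ≤ j → lam v (j + 1) ≤ lam v j)
    {S : Finset C} {u x : C} (hu : u ∈ S) (hx : x ∉ S)
    (hcover : ∀ c ∈ S, Nc A x ∩ Nc A c ⊆ Nc A u) :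
    sco A lam S + sco A lam {x} ≤ sco A lam (insert x (S.erase u)) + sco A lam {u} := by
  rw [sco_singleton, sco_singleton, sco, sco, ← sum_add_distrib, ← sum_add_distrib]
  refine sum_le_sum fun v _ => ?_
  have hS : (A v ∩ S).card = (A v ∩ S.erase u).card + if u ∈ A v then 1 else 0 := by
    conv_lhs => rw [← insert_erase hu]
    exact card_inter_insert _ _ (notMem_erase u S)
  rw [hS, card_inter_insert _ _ (fun h => hx (mem_of_mem_erase h))]
  refine owa_exchange (hmono v) _ _ _ fun hxv huv => card_eq_zero.2 ?_
  refine eq_empty_of_forall_notMem fun c hc => huv ?_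
  obtain ⟨hcv, hcS⟩ := mem_inter.1 hc
  have hv : v ∈ Nc A u := hcover c (mem_of_mem_erase hcS) (by simp [Nc, hxv, hcv])
  simpa [Nc] using hv

end Score

section Sunflower

variable {C V : Type*} [Fintype V] [DecidableEq C] [DecidableEq V]

def IsSunflowerWithCore (A : V → Finset C) (T : Finset C) (Co : Finset V) : Prop :=
  ∀ x ∈ T, ∀ x' ∈ T, x ≠ x' → Nc A x ∩ Nc A x' = Co

def petal (A : V → Finset C) (Co : Finset V) (x : C) : Finset V := Nc A x \ Co

variable {A : V → Finset C} {T : Finset C} {Co : Finset V}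

lemma IsSunflowerWithCore.pairwiseDisjoint_petal (hsun : IsSunflowerWithCore A T Co) :
    (T : Set C).PairwiseDisjoint (petal A Co) := by
  intro x hx x' hx' hne
  rw [Function.onFun, disjoint_iff_inter_eq_empty, petal, petal, eq_empty_iff_forall_notMem]
  intro v hv
  simp only [mem_inter, mem_sdiff] at hv
  exact hv.1.2 (hsun x hx x' hx' hne ▸ mem_inter.2 ⟨hv.1.1, hv.2.1⟩)

lemma IsSunflowerWithCore.card_filter_petal_not_disjoint_le (hsun : IsSunflowerWithCore A T Co)
    (U : Finset V) : (T.filter fun x => ¬Disjoint (petal A Co x) U).card ≤ U.card := by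
  refine (card_le_card_biUnion (f := fun x => petal A Co x ∩ U) ?_ ?_).trans
    (card_le_card (biUnion_subset.2 fun _ _ => inter_subset_right))
  · exact (hsun.pairwiseDisjoint_petal.subset (coe_subset.2 (filter_subset _ _))).mono
      fun _ => inter_subset_left
  · intro x hx
    exact not_disjoint_iff_nonempty_inter.1 (mem_filter.1 hx).2

lemma IsSunflowerWithCore.exists_notMem_disjoint_petal (hsun : IsSunflowerWithCore A T Co)
    {S : Finset C} {U : Finset V} (h : (T ∩ S).card + U.card < T.card) :
    ∃ x ∈ T, x ∉ S ∧ Disjoint (petal A Co x) U := by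
  have hlt : ((T ∩ S) ∪ T.filter fun x => ¬Disjoint (petal A Co x) U).card < T.card :=
    (card_union_le _ _).trans_lt
      (lt_of_le_of_lt (Nat.add_le_add_left (hsun.card_filter_petal_not_disjoint_le U) _) h)
  obtain ⟨x, hxT, hx⟩ := exists_mem_notMem_of_card_lt_card hlt
  simp only [mem_union, mem_inter, mem_filter, not_or, not_and, not_not] at hx
  exact ⟨x, hxT, hx.1 hxT, hx.2 hxT⟩

/-- A voter approving `x` and some `c ∈ S` lies in the core: by the sunflower property if
`c ∈ T`, by `hpetal` otherwise. -/
lemma IsSunflowerWithCore.Nc_inter_subset (hsun : IsSunflowerWithCore A T Co)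
    {S : Finset C} {u x : C} (hu : u ∈ T) (hx : x ∈ T) (hux : u ≠ x) (hxS : x ∉ S)
    (hpetal : Disjoint (petal A Co x) ((S \ T).biUnion (Nc A))) :
    ∀ c ∈ S, Nc A x ∩ Nc A c ⊆ Nc A u := by
  intro c hcS v hv
  obtain ⟨hvx, hvc⟩ := mem_inter.1 hv
  suffices hCo : v ∈ Co by
    rw [← hsun u hu x hx hux] at hCo
    exact (mem_inter.1 hCo).1
  by_cases hcT : c ∈ T
  · rw [← hsun x hx c hcT (fun h => hxS (h ▸ hcS))]
    exact hv
  · by_contra hvCo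
    exact disjoint_left.1 hpetal (mem_sdiff.2 ⟨hvx, hvCo⟩)
      (mem_biUnion.2 ⟨c, mem_sdiff.2 ⟨hcS, hcT⟩, hvc⟩)

end Sunflower

theorem stmt_3_general {C V : Type*} [Fintype V] [DecidableEq C] [DecidableEq V]
    (A : V → Finset C) (lam : V → ℕ → ℚ)
    (hmono : ∀ (v : V) (j : ℕ), 1 ≤ j → lam v (j + 1) ≤ lam v j)
    (k W : ℕ) (hdeg : ∀ c : C, (Nc A c).card ≤ W)
    (T : Finset C) (Co : Finset V)
    (hsun : ∀ x ∈ T, ∀ x' ∈ T, x ≠ x' → Nc A x ∩ Nc A x' = Co)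
    (hT : W * k + 1 ≤ T.card)
    (u : C) (huT : u ∈ T)
    (humin : ∀ x ∈ T, sco A lam {u} ≤ sco A lam {x}) :
    ∀ t : ℚ, (∃ S : Finset C, S.card ≤ k ∧ t ≤ sco A lam S) ↔
      (∃ S' : Finset C, u ∉ S' ∧ S'.card ≤ k ∧ t ≤ sco A lam S') := by
  intro t
  refine ⟨fun ⟨S, hSk, ht⟩ => ?_, fun ⟨S', _, hS'k, ht⟩ => ⟨S', hS'k, ht⟩⟩
  by_cases huS : u ∉ S
  · exact ⟨S, huS, hSk, ht⟩
  rw [not_not] at huS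
  rcases Nat.eq_zero_or_pos W with rfl | hW
  · have hu : Nc A u = ∅ := card_eq_zero.1 (Nat.le_zero.1 (hdeg u))
    exact ⟨S.erase u, notMem_erase u S, (card_erase_le).trans hSk,
      (sco_erase_of_Nc_eq_empty A lam hu S).symm ▸ ht⟩
  set U := (S \ T).biUnion (Nc A)
  have hcount : (T ∩ S).card + U.card < T.card := by
    have hU : U.card ≤ (S \ T).card * W := card_biUnion_le_card_mul _ _ _ fun c _ => hdeg c
    have hsplit := card_inter_add_card_sdiff S T
    rw [inter_comm]
    nlinarith
  obtain ⟨x, hxT, hxS, hpetal⟩ := IsSunflowerWithCore.exists_notMem_disjoint_petal hsun hcount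
  have hux : u ≠ x := fun h => hxS (h ▸ huS)
  have hexch := sco_add_le_sco_insert_erase A lam hmono huS hxS
    (IsSunflowerWithCore.Nc_inter_subset hsun huT hxT hux hxS hpetal)
  refine ⟨insert x (S.erase u), by simp [hux], ?_, by linarith [humin x hxT]⟩
  calc (insert x (S.erase u)).card ≤ (S.erase u).card + 1 := card_insert_le _ _
    _ = S.card := card_erase_add_one huS
    _ ≤ k := hSk

/-- Correctness of the sunflower reduction rule: if all candidate degrees are at most `W`,
`T` is a sunflower of size at least `W*k + 1`, and `u ∈ T` has minimum singleton score in `T`,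
then for every threshold `t` there is a committee of size at most `k` with score at least `t`
iff there is one avoiding `u` (the score of a committee avoiding `u` is the same in the
profile with candidate `u` deleted). -/
theorem stmt_3 {C V : Type*} [Fintype V] [DecidableEq C] [DecidableEq V]
    (A : V → Finset C) (lam : V → ℕ → ℚ)
    (hnonneg : ∀ (v : V) (j : ℕ), 1 ≤ j → 0 ≤ lam v j)
    (hmono : ∀ (v : V) (j : ℕ), 1 ≤ j → lam v (j + 1) ≤ lam v j)
    (k W : ℕ) (hdeg : ∀ c : C, (Nc A c).card ≤ W)
    (T : Finset C) (Co : Finset V)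
    (hsun : ∀ x ∈ T, ∀ x' ∈ T, x ≠ x' → Nc A x ∩ Nc A x' = Co)
    (hT : W * k + 1 ≤ T.card)
    (u : C) (huT : u ∈ T)
    (humin : ∀ x ∈ T, sco A lam {u} ≤ sco A lam {x}) :
    ∀ t : ℚ, (∃ S : Finset C, S.card ≤ k ∧ t ≤ sco A lam S) ↔
      (∃ S' : Finset C, u ∉ S' ∧ S'.card ≤ k ∧ t ≤ sco A lam S') :=
  stmt_3_general A lam hmono k W hdeg T Co hsun hT u huT humin
end

section
/- Suppose the profile graph is K_{d,d}-free, every OWA vector λ^v is non-increasing with entries in [0, 1], and λ_min = min_{v∈V} λ^v_1 > 0. Let k ≥ 1 be an integer, let ε ∈ (0, 1), let r = 4dk/(ελ_min) + k, and let t be a rational with t > 2k·r^d·(d−1)/((r−k)ε). Suppose |C| ≥ ⌈r⌉ and let C_r ⊆ C be a set of ⌈r⌉ candidates of highest singleton score (i.e. sco({c}) ≥ sco({c'}) for every c ∈ C_r and every c' ∈ C \ C_r). If there exists O ⊆ C with |O| ≤ k and sco(O) ≥ t, then there exists S ⊆ C_r with |S| ≤ k and sco(S) ≥ (1 − ε)·t.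 -/
set_option linter.unusedSectionVars false
open Finset

def KddFree {C V : Type*} (A : V → Finset C) (d : ℕ) : Prop :=
  ¬ ∃ (D : Finset V) (E : Finset C), D.card = d ∧ E.card = d ∧ ∀ v ∈ D, E ⊆ A v

section Aux
variable {C V : Type*} [Fintype V] [DecidableEq C]

lemma lam_le_first (lam : V → ℕ → ℚ)
    (hmono : ∀ (v : V) (j : ℕ), 1 ≤ j → lam v (j + 1) ≤ lam v j)
    (v : V) : ∀ j, 1 ≤ j → lam v j ≤ lam v 1 := by
  intro j
  induction j with
  | zero => omega
  | succ n ih =>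
    intro _
    rcases Nat.eq_zero_or_pos n with h | h
    · subst h; exact le_refl _
    · exact (hmono v n h).trans (ih h)

lemma sco_nonneg (A : V → Finset C) (lam : V → ℕ → ℚ)
    (h : ∀ v j, 1 ≤ j → 0 ≤ lam v j) (S : Finset C) : 0 ≤ sco A lam S :=
  Finset.sum_nonneg fun v _ => Finset.sum_nonneg fun j hj => h v j (Finset.mem_Icc.1 hj).1

lemma sco_single (A : V → Finset C) (lam : V → ℕ → ℚ) (c : C) :
    sco A lam {c} = ∑ v ∈ Finset.univ.filter (fun v => c ∈ A v), lam v 1 := by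
  rw [sco, Finset.sum_filter]
  refine Finset.sum_congr rfl fun v _ => ?_
  by_cases h : c ∈ A v
  · rw [Finset.inter_singleton_of_mem h]
    simp [h]
  · rw [Finset.inter_singleton_of_notMem h]
    simp [h]

lemma sco_erase_ge (A : V → Finset C) (lam : V → ℕ → ℚ)
    (h0 : ∀ v j, 1 ≤ j → 0 ≤ lam v j)
    (hle : ∀ v j, 1 ≤ j → lam v j ≤ lam v 1)
    (S : Finset C) (c : C) :
    sco A lam S - sco A lam {c} ≤ sco A lam (S.erase c) := by
  rw [sco_single, sub_le_iff_le_add, sco, sco, Finset.sum_filter, ← Finset.sum_add_distrib]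
  refine Finset.sum_le_sum fun v _ => ?_
  have hsub : A v ∩ S.erase c = (A v ∩ S).erase c := by
    ext x
    simp only [Finset.mem_inter, Finset.mem_erase]
    tauto
  rw [hsub]
  by_cases hc : c ∈ A v ∩ S
  · have hcA : c ∈ A v := (Finset.mem_inter.1 hc).1
    rw [if_pos hcA]
    have hpos : 1 ≤ (A v ∩ S).card := Finset.card_pos.2 ⟨c, hc⟩
    rw [Finset.card_erase_of_mem hc]
    obtain ⟨m, hm⟩ : ∃ m, (A v ∩ S).card = m + 1 := ⟨(A v ∩ S).card - 1, by omega⟩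
    rw [hm]
    simp only [Nat.add_sub_cancel]
    rw [Finset.sum_Icc_succ_top (by omega : 1 ≤ m + 1)]
    have : lam v (m + 1) ≤ lam v 1 := hle v (m+1) (by omega)
    linarith
  · rw [Finset.erase_eq_of_notMem hc]
    have : (0:ℚ) ≤ if c ∈ A v then lam v 1 else 0 := by
      split
      · exact h0 v 1 le_rfl
      · exact le_refl 0
    linarith

lemma sco_insert_ge (A : V → Finset C) (lam : V → ℕ → ℚ)
    (h0 : ∀ v j, 1 ≤ j → 0 ≤ lam v j) (h1 : ∀ v j, 1 ≤ j → lam v j ≤ 1)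
    (S : Finset C) (c : C) (hc : c ∉ S) :
    sco A lam S + sco A lam {c}
      - ((Finset.univ.filter (fun v => (A v ∩ S).Nonempty ∧ c ∈ A v)).card : ℚ)
      ≤ sco A lam (insert c S) := by
  have hcardq : ((Finset.univ.filter (fun v => (A v ∩ S).Nonempty ∧ c ∈ A v)).card : ℚ)
      = ∑ v : V, if ((A v ∩ S).Nonempty ∧ c ∈ A v) then (1:ℚ) else 0 := by
    rw [Finset.card_filter, Nat.cast_sum]
    exact Finset.sum_congr rfl fun v _ => by split <;> simp
  rw [sco_single, hcardq, sub_le_iff_le_add, sco, sco, Finset.sum_filter,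
    ← Finset.sum_add_distrib, ← Finset.sum_add_distrib]
  refine Finset.sum_le_sum fun v _ => ?_
  by_cases hcA : c ∈ A v
  · have hins : A v ∩ insert c S = insert c (A v ∩ S) := by
      ext x
      simp only [Finset.mem_inter, Finset.mem_insert]
      constructor
      · rintro ⟨hx, rfl | hx2⟩
        · exact Or.inl rfl
        · exact Or.inr ⟨hx, hx2⟩
      · rintro (rfl | ⟨hx, hx2⟩)
        · exact ⟨hcA, Or.inl rfl⟩
        · exact ⟨hx, Or.inr hx2⟩
    have hcnot : c ∉ A v ∩ S := fun h => hc (Finset.mem_inter.1 h).2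
    rw [hins, if_pos hcA, Finset.card_insert_of_notMem hcnot,
      Finset.sum_Icc_succ_top (by omega : 1 ≤ (A v ∩ S).card + 1)]
    by_cases hne : (A v ∩ S).Nonempty
    · rw [if_pos ⟨hne, hcA⟩]
      have e1 : lam v 1 ≤ 1 := h1 v 1 le_rfl
      have e2 : 0 ≤ lam v ((A v ∩ S).card + 1) := h0 v _ (by omega)
      linarith
    · rw [if_neg (by tauto)]
      rw [Finset.not_nonempty_iff_eq_empty] at hne
      simp [hne]
  · have hins : A v ∩ insert c S = A v ∩ S := by
      ext x
      simp only [Finset.mem_inter, Finset.mem_insert]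
      refine ⟨fun ⟨h1', h2'⟩ => ⟨h1', h2'.resolve_left ?_⟩, fun ⟨h1', h2'⟩ => ⟨h1', Or.inr h2'⟩⟩
      rintro rfl; exact hcA h1'
    rw [hins, if_neg hcA, if_neg (by tauto)]

lemma approvers_le {d : ℕ} (A : V → Finset C) (hfree : KddFree A d)
    (E : Finset C) (hE : E.card = d) :
    (Finset.univ.filter (fun v => E ⊆ A v)).card ≤ d - 1 := by
  by_contra h
  push_neg at h
  have hd : d ≤ (Finset.univ.filter (fun v => E ⊆ A v)).card := by omega
  obtain ⟨D, hD, hDcard⟩ := Finset.exists_subset_card_eq hd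
  exact hfree ⟨D, E, hDcard, hE, fun v hv => (Finset.mem_filter.1 (hD hv)).2⟩

lemma sum_choose_le [Fintype C] {d : ℕ} (A : V → Finset C) (hfree : KddFree A d)
    (Cr : Finset C) :
    ∑ v : V, ((A v ∩ Cr).card).choose d ≤ (d - 1) * (Cr.card).choose d := by
  have key : ∀ v : V, ((A v ∩ Cr).card).choose d
      = ((Cr.powersetCard d).filter (fun E => E ⊆ A v)).card := by
    intro v
    rw [← Finset.card_powersetCard]
    congr 1
    ext E
    simp only [Finset.mem_powersetCard, Finset.mem_filter, Finset.subset_inter_iff]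
    tauto
  calc ∑ v : V, ((A v ∩ Cr).card).choose d
      = ∑ v : V, ∑ E ∈ Cr.powersetCard d, if E ⊆ A v then 1 else 0 := by
        simp_rw [key, Finset.card_filter]
    _ = ∑ E ∈ Cr.powersetCard d, (Finset.univ.filter (fun v => E ⊆ A v)).card := by
        rw [Finset.sum_comm]
        exact Finset.sum_congr rfl fun E _ => (Finset.card_filter _ _).symm
    _ ≤ ∑ _E ∈ Cr.powersetCard d, (d - 1) := by
        refine Finset.sum_le_sum fun E hE => ?_
        exact approvers_le A hfree E (Finset.mem_powersetCard.1 hE).2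
    _ = (Cr.powersetCard d).card * (d-1) := by rw [Finset.sum_const, smul_eq_mul]
    _ = (d - 1) * (Cr.card).choose d := by rw [Finset.card_powersetCard, mul_comm]

lemma le_mul_choose (d m : ℕ) (hd : 1 ≤ d) (hm : d ≤ m) : m ≤ d * m.choose d := by
  obtain ⟨n, rfl⟩ : ∃ n, m = n + 1 := ⟨m - 1, by omega⟩
  obtain ⟨e, rfl⟩ : ∃ e, d = e + 1 := ⟨d - 1, by omega⟩
  have h := Nat.add_one_mul_choose_eq n e
  have hne : 1 ≤ n.choose e := Nat.choose_pos (by omega)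
  nlinarith [h, hne]

lemma counting [Fintype C] {d : ℕ} (A : V → Finset C) (hd : 1 ≤ d) (hfree : KddFree A d)
    (Cr T : Finset C) (hT : T ⊆ Cr) (NW : Finset V) :
    ∑ c ∈ T, (NW.filter (fun v => c ∈ A v)).card
      ≤ (d - 1) * NW.card + d * ((d - 1) * (Cr.card).choose d) := by
  have swap : ∑ c ∈ T, (NW.filter (fun v => c ∈ A v)).card
      = ∑ v ∈ NW, (A v ∩ T).card := by
    simp_rw [Finset.card_filter]
    rw [Finset.sum_comm]
    refine Finset.sum_congr rfl fun v _ => ?_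
    rw [← Finset.card_filter]
    congr 1
    ext x
    simp only [Finset.mem_filter, Finset.mem_inter]
    tauto
  rw [swap]
  have pt : ∀ v ∈ NW, (A v ∩ T).card ≤ (d-1) + d * ((A v ∩ Cr).card).choose d := by
    intro v _
    have hsub : (A v ∩ T).card ≤ (A v ∩ Cr).card :=
      Finset.card_le_card (Finset.inter_subset_inter le_rfl hT)
    by_cases hcase : (A v ∩ Cr).card ≤ d - 1
    · omega
    · have hge : d ≤ (A v ∩ Cr).card := by omega
      have := le_mul_choose d ((A v ∩ Cr).card) hd hge
      omega
  calc ∑ v ∈ NW, (A v ∩ T).card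
      ≤ ∑ v ∈ NW, ((d-1) + d * ((A v ∩ Cr).card).choose d) := Finset.sum_le_sum pt
    _ = (d-1) * NW.card + d * ∑ v ∈ NW, ((A v ∩ Cr).card).choose d := by
        rw [Finset.sum_add_distrib, Finset.sum_const, smul_eq_mul, Finset.mul_sum, mul_comm]
    _ ≤ (d-1) * NW.card + d * ∑ v : V, ((A v ∩ Cr).card).choose d :=
        Nat.add_le_add_left (Nat.mul_le_mul le_rfl
          (Finset.sum_le_sum_of_subset (Finset.subset_univ NW))) _
    _ ≤ (d - 1) * NW.card + d * ((d - 1) * (Cr.card).choose d) :=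
        Nat.add_le_add_left (Nat.mul_le_mul le_rfl (sum_choose_le A hfree Cr)) _

lemma d_mul_choose_le (n d : ℕ) (hn : 1 ≤ n) (hd : 1 ≤ d) :
    d * n.choose d ≤ n * (n-1)^(d-1) := by
  obtain ⟨m, rfl⟩ : ∃ m, n = m + 1 := ⟨n - 1, by omega⟩
  obtain ⟨e, rfl⟩ : ∃ e, d = e + 1 := ⟨d - 1, by omega⟩
  have h := Nat.add_one_mul_choose_eq m e
  simp only [Nat.add_sub_cancel]
  calc (e+1) * (m+1).choose (e+1) = (m+1).choose (e+1) * (e+1) := Nat.mul_comm _ _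
    _ = (m+1) * m.choose e := by
        have h' := (Nat.add_one_mul_choose_eq m e).symm
        simpa [Nat.succ_eq_add_one] using h'
    _ ≤ (m+1) * m ^ e := Nat.mul_le_mul le_rfl (Nat.choose_le_pow m e)
end Aux


lemma heavy_bound (k d q : ℕ) (r ε t : ℚ) (hrk : 0 < r - k) (hε : 0 < ε)
    (hdq1 : (d:ℚ)*q ≤ (3/2)*r^d) (hd : (2:ℚ) ≤ d) (hk : (1:ℚ) ≤ k) (hr0 : 0 < r)
    (ht : 2*k*r^d*((d:ℚ)-1)/((r-k)*ε) < t) :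
    (k:ℚ) * (((d:ℚ) * (((d:ℚ)-1) * q))/(r-k)) ≤ (3/4)*ε*t := by
  have hεne : ε ≠ 0 := ne_of_gt hε
  have hrkne : r - (k:ℚ) ≠ 0 := ne_of_gt hrk
  have h1 : (3/4)*ε * (2*(k:ℚ)*r^d*((d:ℚ)-1)/((r-k)*ε)) = (3/2)*(k:ℚ)*r^d*((d:ℚ)-1)/(r-k) := by
    field_simp
    ring
  have h2 : (k:ℚ)*(((d:ℚ) * (((d:ℚ)-1) * q))/(r-k)) ≤ (3/2)*(k:ℚ)*r^d*((d:ℚ)-1)/(r-k) := by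
    have hkd : (0:ℚ) ≤ (k:ℚ)*((d:ℚ)-1) := mul_nonneg (by linarith) (by linarith)
    have hmul := mul_le_mul_of_nonneg_left hdq1 hkd
    have hnum : (k:ℚ)*((d:ℚ)*(((d:ℚ)-1)*q)) ≤ (3/2)*(k:ℚ)*r^d*((d:ℚ)-1) := by nlinarith [hmul]
    calc (k:ℚ)*(((d:ℚ)*(((d:ℚ)-1)*q))/(r-k)) = ((k:ℚ)*((d:ℚ)*(((d:ℚ)-1)*q)))/(r-k) := by ring
      _ ≤ (3/2)*(k:ℚ)*r^d*((d:ℚ)-1)/(r-k) := div_le_div_of_nonneg_right hnum hrk.le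
  have h3 : (3/4)*ε*(2*(k:ℚ)*r^d*((d:ℚ)-1)/((r-k)*ε)) ≤ (3/4)*ε*t := by
    apply mul_le_mul_of_nonneg_left (le_of_lt ht) (by positivity)
  rw [h1] at h3
  linarith

set_option maxHeartbeats 1000000 in
/-- Case 2 of the FPT-AS: if the profile graph is `K_{d,d}`-free, the threshold `t` is large,
and `C_r` consists of `⌈r⌉` candidates of highest singleton score, then any committee of size
at most `k` and score at least `t` can be replaced by one inside `C_r` of score `(1-ε)t`. -/
theorem stmt_6 {C V : Type*} [Fintype C] [Fintype V] [DecidableEq C]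
    (A : V → Finset C) (lam : V → ℕ → ℚ)
    (d : ℕ) (hfree : KddFree A d)
    (hrange : ∀ (v : V) (j : ℕ), 1 ≤ j → 0 ≤ lam v j ∧ lam v j ≤ 1)
    (hmono : ∀ (v : V) (j : ℕ), 1 ≤ j → lam v (j + 1) ≤ lam v j)
    (lammin : ℚ)
    (hlmin : IsLeast (Set.range fun v : V => lam v 1) lammin)
    (hlpos : 0 < lammin)
    (k : ℕ) (hk : 1 ≤ k)
    (ε : ℚ) (hε0 : 0 < ε) (hε1 : ε < 1)
    (r : ℚ) (hr : r = 4 * d * k / (ε * lammin) + k)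
    (t : ℚ) (ht : 2 * k * r ^ d * ((d : ℚ) - 1) / ((r - k) * ε) < t)
    (hCn : ⌈r⌉ ≤ (Fintype.card C : ℤ))
    (Cr : Finset C) (hCrcard : (Cr.card : ℤ) = ⌈r⌉)
    (hCr : ∀ c ∈ Cr, ∀ c' ∉ Cr, sco A lam {c'} ≤ sco A lam {c}) :
    (∃ O : Finset C, O.card ≤ k ∧ t ≤ sco A lam O) →
      ∃ S : Finset C, S ⊆ Cr ∧ S.card ≤ k ∧ (1 - ε) * t ≤ sco A lam S := by
  rintro ⟨O, hOcard, hOsco⟩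
  -- degenerate cases d = 0, d = 1
  rcases Nat.eq_zero_or_pos d with hd0 | hdpos
  · exact absurd ⟨∅, ∅, by simp [hd0], by simp [hd0], by simp⟩ hfree
  rcases eq_or_lt_of_le (by omega : 1 ≤ d) with hd1 | hd2
  · exfalso
    have hA : ∀ v, A v = ∅ := by
      intro v
      rcases Finset.eq_empty_or_nonempty (A v) with h | ⟨c, hc⟩
      · exact h
      · exact absurd ⟨{v}, {c}, by simp [← hd1], by simp [← hd1], by simp [hc]⟩ hfree
    have h0 : sco A lam O = 0 := by
      simp [sco, hA]
    have ht0 : (0:ℚ) < t := by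
      have hz : ((d:ℚ) - 1) = 0 := by rw [← hd1]; norm_num
      rw [hz] at ht
      simpa using ht
    linarith
  -- main case : 2 ≤ d
  have hd1n : 1 ≤ d := hdpos
  have h0' : ∀ v j, 1 ≤ j → 0 ≤ lam v j := fun v j hj => (hrange v j hj).1
  have h1' : ∀ v j, 1 ≤ j → lam v j ≤ 1 := fun v j hj => (hrange v j hj).2
  have hle' := lam_le_first lam hmono
  obtain ⟨v₀, hv₀⟩ := hlmin.1
  have hlle1 : lammin ≤ 1 := hv₀ ▸ (hrange v₀ 1 le_rfl).2
  have hdq : (2:ℚ) ≤ d := by exact_mod_cast hd2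
  have hkq : (1:ℚ) ≤ k := by exact_mod_cast hk
  have hεl : 0 < ε * lammin := mul_pos hε0 hlpos
  have hεl1 : ε * lammin < 1 := by nlinarith
  have hrk : r - (k:ℚ) = 4*d*k/(ε*lammin) := by rw [hr]; ring
  have h4dk : (8:ℚ) ≤ 4*d*k := by nlinarith
  have hrkpos : (0:ℚ) < r - k := by
    rw [hrk]
    apply div_pos (by nlinarith) hεl
  have hrk8 : (8:ℚ) ≤ r - k := by
    rw [hrk, le_div_iff₀ hεl]
    nlinarith
  have hr2 : (2:ℚ) ≤ r := by linarith
  have hr0 : (0:ℚ) < r := by linarith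
  set n := Cr.card with hn
  have hnr : (r:ℚ) ≤ n := by
    calc r ≤ (⌈r⌉:ℚ) := Int.le_ceil r
      _ = ((n:ℤ):ℚ) := by rw [hCrcard]
      _ = n := by push_cast; rfl
  have hnr1 : (n:ℚ) < r + 1 := by
    calc (n:ℚ) = ((n:ℤ):ℚ) := by push_cast; rfl
      _ = (⌈r⌉:ℚ) := by rw [hCrcard]
      _ < r + 1 := Int.ceil_lt_add_one r
  have hn1 : 1 ≤ n := by
    by_contra h
    have : n = 0 := by omega
    rw [this] at hnr
    norm_num at hnr
    linarith
  set q : ℕ := n.choose d with hq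
  set β : ℚ := ((d:ℚ)-1)/(lammin*(r-k)) with hβ
  set Hq : ℚ := ((d:ℚ) * (((d:ℚ)-1) * q))/(r-k) with hHq
  have hlrkpos : 0 < lammin*(r-k) := mul_pos hlpos hrkpos
  have hlrk : lammin*(r-k) = 4*d*k/ε := by
    rw [hrk]
    field_simp
  have hβ0 : 0 ≤ β := div_nonneg (by linarith) hlrkpos.le
  have hkβ : (k:ℚ) * β = ((d:ℚ)-1)*ε/(4*d) := by
    rw [hβ, hlrk]
    field_simp
  have hkβle : (k:ℚ)*β ≤ ε/4 := by
    rw [hkβ, div_le_div_iff₀ (by linarith) (by norm_num)]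
    nlinarith
  have hβ1 : β ≤ 1 := by
    have : β ≤ (k:ℚ)*β := le_mul_of_one_le_left hβ0 hkq
    linarith
  have hH0 : 0 ≤ Hq := by
    rw [hHq]
    apply div_nonneg _ hrkpos.le
    have hq0 : (0:ℚ) ≤ q := Nat.cast_nonneg q
    have h1 : (0:ℚ) ≤ ((d:ℚ)-1)*q := mul_nonneg (by linarith) hq0
    exact mul_nonneg (by linarith) h1
  have hdm1cast : ((d-1:ℕ):ℚ) = (d:ℚ)-1 := by
    rw [Nat.cast_sub hd1n, Nat.cast_one]
  -- score is at least lammin times number of represented voters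
  have hNWsco : ∀ S : Finset C,
      lammin * ((Finset.univ.filter (fun v => (A v ∩ S).Nonempty)).card : ℚ) ≤ sco A lam S := by
    intro S
    have hcard : lammin * ((Finset.univ.filter (fun v => (A v ∩ S).Nonempty)).card : ℚ)
        = ∑ v ∈ Finset.univ.filter (fun v => (A v ∩ S).Nonempty), lammin := by
      rw [Finset.sum_const, nsmul_eq_mul, mul_comm]
    rw [hcard, sco]
    calc ∑ v ∈ Finset.univ.filter (fun v => (A v ∩ S).Nonempty), lammin
        ≤ ∑ v ∈ Finset.univ.filter (fun v => (A v ∩ S).Nonempty),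
            ∑ j ∈ Finset.Icc 1 ((A v ∩ S).card), lam v j := by
          refine Finset.sum_le_sum fun v hv => ?_
          have hne : (A v ∩ S).Nonempty := (Finset.mem_filter.1 hv).2
          have hm : 1 ≤ (A v ∩ S).card := Finset.card_pos.2 hne
          have hg1 : lammin ≤ lam v 1 := hlmin.2 ⟨v, rfl⟩
          have hg2 : lam v 1 ≤ ∑ j ∈ Finset.Icc 1 ((A v ∩ S).card), lam v j :=
            Finset.single_le_sum (fun j hj => h0' v j (Finset.mem_Icc.1 hj).1)
              (Finset.mem_Icc.2 ⟨le_rfl, hm⟩)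
          linarith
      _ ≤ ∑ v : V, ∑ j ∈ Finset.Icc 1 ((A v ∩ S).card), lam v j :=
          Finset.sum_le_sum_of_subset_of_nonneg (Finset.subset_univ _)
            (fun v _ _ => Finset.sum_nonneg fun j hj => h0' v j (Finset.mem_Icc.1 hj).1)
  -- one swap step
  have hstep : ∀ S : Finset C, S.card ≤ k → (S \ Cr).Nonempty →
      ∃ S₁ : Finset C, S₁.card ≤ S.card ∧ (S₁ \ Cr).card + 1 = (S \ Cr).card ∧
        (1-β) * sco A lam S - Hq ≤ sco A lam S₁ := by
    intro S hScard hSne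
    obtain ⟨c', hc'⟩ := hSne
    have hc'S : c' ∈ S := (Finset.mem_sdiff.1 hc').1
    have hc'Cr : c' ∉ Cr := (Finset.mem_sdiff.1 hc').2
    set W := S.erase c' with hW
    set T := Cr \ W with hT
    have hTsub : T ⊆ Cr := Finset.sdiff_subset
    have hWcard : W.card + 1 = S.card := by
      rw [hW, Finset.card_erase_of_mem hc'S]
      have : 1 ≤ S.card := Finset.card_pos.2 ⟨c', hc'S⟩
      omega
    have hTcard : (r:ℚ) - k < T.card := by
      have h1 : n ≤ T.card + W.card := Finset.card_le_card_sdiff_add_card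
      have h2 : (W.card:ℚ) ≤ (k:ℚ) - 1 := by
        have hwk : W.card + 1 ≤ k := by omega
        have : ((W.card + 1 : ℕ):ℚ) ≤ (k:ℚ) := by exact_mod_cast hwk
        push_cast at this
        linarith
      have h3 : (n:ℚ) ≤ (T.card:ℚ) + (W.card:ℚ) := by exact_mod_cast h1
      linarith
    have hTpos : T.Nonempty := by
      rw [← Finset.card_pos]
      by_contra h
      have : T.card = 0 := by omega
      rw [this] at hTcard
      norm_num at hTcard
      linarith
    set NWW := Finset.univ.filter (fun v => (A v ∩ W).Nonempty) with hNWW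
    obtain ⟨c, hcT, hcmin⟩ := Finset.exists_min_image T
      (fun c => ((NWW.filter (fun v => c ∈ A v)).card : ℕ)) hTpos
    set L : ℕ := (NWW.filter (fun v => c ∈ A v)).card with hL
    have hsum : T.card * L ≤ (d-1) * NWW.card + d * ((d-1) * q) := by
      calc T.card * L ≤ ∑ x ∈ T, (NWW.filter (fun v => x ∈ A v)).card := by
            have := Finset.card_nsmul_le_sum T
              (fun x => ((NWW.filter (fun v => x ∈ A v)).card : ℕ)) L
              (fun x hx => hcmin x hx)
            simpa [smul_eq_mul] using this
        _ ≤ _ := counting A hd1n hfree Cr T hTsub NWW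
    have hWsubS : W ⊆ S := Finset.erase_subset _ _
    have hNWWsub : NWW.card ≤ (Finset.univ.filter (fun v => (A v ∩ S).Nonempty)).card := by
      apply Finset.card_le_card
      intro v hv
      rw [Finset.mem_filter] at hv ⊢
      obtain ⟨x, hx⟩ := hv.2
      rw [Finset.mem_inter] at hx
      exact ⟨hv.1, ⟨x, Finset.mem_inter.2 ⟨hx.1, hWsubS hx.2⟩⟩⟩
    have hNWq : lammin * ((NWW.card:ℚ)) ≤ sco A lam S := by
      have hc1 : (NWW.card:ℚ) ≤ ((Finset.univ.filter (fun v => (A v ∩ S).Nonempty)).card : ℚ) := by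
        exact_mod_cast hNWWsub
      calc lammin * ((NWW.card:ℚ))
          ≤ lammin * ((Finset.univ.filter (fun v => (A v ∩ S).Nonempty)).card : ℚ) := by
            nlinarith
        _ ≤ sco A lam S := hNWsco S
    have hscoS0 : 0 ≤ sco A lam S := sco_nonneg A lam h0' S
    -- bound L
    have hLq : (L:ℚ) ≤ β * sco A lam S + Hq := by
      have hby : (L:ℚ) * (r - k) ≤ ((d:ℚ)-1) * (sco A lam S / lammin) + (d:ℚ)*(((d:ℚ)-1)*q) := by
        have e1 : (L:ℚ) * (r - k) ≤ (L:ℚ) * T.card :=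
          mul_le_mul_of_nonneg_left (le_of_lt hTcard) (Nat.cast_nonneg L)
        have e2 : (L:ℚ) * T.card ≤ ((d:ℚ)-1) * NWW.card + (d:ℚ)*(((d:ℚ)-1)*q) := by
          have := hsum
          have hcast : ((T.card * L : ℕ):ℚ) ≤ (((d-1) * NWW.card + d * ((d-1) * q) : ℕ):ℚ) := by
            exact_mod_cast this
          push_cast [hdm1cast] at hcast
          linarith
        have e3 : ((d:ℚ)-1) * NWW.card ≤ ((d:ℚ)-1) * (sco A lam S / lammin) := by
          have : (NWW.card:ℚ) ≤ sco A lam S / lammin := by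
            rw [le_div_iff₀ hlpos]
            linarith [hNWq]
          nlinarith
        linarith
      have heq : (((d:ℚ)-1) * (sco A lam S / lammin) + (d:ℚ)*(((d:ℚ)-1)*q)) / (r-k)
          = β * sco A lam S + Hq := by
        rw [hβ, hHq]
        field_simp
      rw [← heq, le_div_iff₀ hrkpos]
      linarith
    have hcCr : c ∈ Cr := (Finset.mem_sdiff.1 hcT).1
    have hcW : c ∉ W := (Finset.mem_sdiff.1 hcT).2
    refine ⟨insert c W, ?_, ?_, ?_⟩
    · rw [Finset.card_insert_of_notMem hcW]
      omega
    · have hset : insert c W \ Cr = (S \ Cr).erase c' := by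
        ext x
        simp only [Finset.mem_sdiff, Finset.mem_insert, Finset.mem_erase, hW]
        constructor
        · rintro ⟨rfl | ⟨hx1, hx2⟩, hx3⟩
          · exact absurd hcCr hx3
          · exact ⟨hx1, hx2, hx3⟩
        · rintro ⟨hx1, hx2, hx3⟩
          exact ⟨Or.inr ⟨hx1, hx2⟩, hx3⟩
      rw [hset, Finset.card_erase_of_mem hc']
      have : 1 ≤ (S \ Cr).card := Finset.card_pos.2 ⟨c', hc'⟩
      omega
    · have e1 : sco A lam S - sco A lam {c'} ≤ sco A lam W := sco_erase_ge A lam h0' hle' S c'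
      have e2 : sco A lam W + sco A lam {c}
          - ((Finset.univ.filter (fun v => (A v ∩ W).Nonempty ∧ c ∈ A v)).card : ℚ)
          ≤ sco A lam (insert c W) := sco_insert_ge A lam h0' h1' W c hcW
      have hLeq : (L:ℚ)
          = ((Finset.univ.filter (fun v => (A v ∩ W).Nonempty ∧ c ∈ A v)).card : ℚ) := by
        rw [hL, hNWW, Finset.filter_filter]
      have e3 : sco A lam {c'} ≤ sco A lam {c} := hCr c hcCr c' hc'Cr
      have hβs : β * sco A lam S + Hq ≥ (L:ℚ) := hLq
      rw [← hLeq] at e2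
      linarith
  -- induction on the number of bad candidates
  have main : ∀ b : ℕ, ∀ S : Finset C, S.card ≤ k → (S \ Cr).card = b →
      ∃ S', S' ⊆ Cr ∧ S'.card ≤ k ∧ (1-β)^b * sco A lam S - b * Hq ≤ sco A lam S' := by
    intro b
    induction b with
    | zero =>
      intro S hcard hzero
      refine ⟨S, ?_, hcard, by simp⟩
      exact Finset.sdiff_eq_empty_iff_subset.1 (Finset.card_eq_zero.1 hzero)
    | succ b ih =>
      intro S hcard hb
      have hne : (S \ Cr).Nonempty := Finset.card_pos.1 (by omega)
      obtain ⟨S₁, hc1, hc2, hc3⟩ := hstep S hcard hne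
      obtain ⟨S', hsub, hcard', hsco'⟩ := ih S₁ (hc1.trans hcard) (by omega)
      refine ⟨S', hsub, hcard', ?_⟩
      have hpow0 : (0:ℚ) ≤ (1-β)^b := pow_nonneg (by linarith) b
      have hpow1 : (1-β)^b ≤ 1 := pow_le_one₀ (by linarith) (by linarith)
      have e1 : (1-β)^(b+1) * sco A lam S - (1-β)^b * Hq ≤ (1-β)^b * sco A lam S₁ := by
        calc (1-β)^(b+1) * sco A lam S - (1-β)^b * Hq
            = (1-β)^b * ((1-β) * sco A lam S - Hq) := by rw [pow_succ]; ring
          _ ≤ (1-β)^b * sco A lam S₁ := mul_le_mul_of_nonneg_left hc3 hpow0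
      have e2 : (1-β)^b * Hq ≤ Hq := mul_le_of_le_one_left hH0 hpow1
      have hbc : ((b+1:ℕ):ℚ) = (b:ℚ)+1 := by push_cast; ring
      rw [hbc]
      linarith
  obtain ⟨S', hsub, hScard, hsco⟩ := main (O \ Cr).card O hOcard rfl
  refine ⟨S', hsub, hScard, ?_⟩
  set b := (O \ Cr).card with hbdef
  have hbk : b ≤ k := le_trans (Finset.card_le_card Finset.sdiff_subset) hOcard
  have htpos : 0 < t := by
    refine lt_of_le_of_lt ?_ ht
    apply div_nonneg
    · have h1 : (0:ℚ) ≤ r^d := by positivity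
      exact mul_nonneg (mul_nonneg (by linarith) h1) (by linarith)
    · nlinarith
  have hpow_b : (1-β)^k ≤ (1-β)^b := pow_le_pow_of_le_one (by linarith) (by linarith) hbk
  have h5 : (1-β)^k * t ≤ (1-β)^b * sco A lam O := by
    have hx1 : (1-β)^k * t ≤ (1-β)^b * t := mul_le_mul_of_nonneg_right hpow_b htpos.le
    have hx2 : (1-β)^b * t ≤ (1-β)^b * sco A lam O :=
      mul_le_mul_of_nonneg_left hOsco (pow_nonneg (by linarith) b)
    linarith
  have hbern : 1 - (k:ℚ)*β ≤ (1-β)^k := by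
    have := one_add_mul_le_pow (a := -β) (by linarith) k
    have hre : (1:ℚ) + (k:ℚ) * (-β) = 1 - (k:ℚ)*β := by ring
    rw [hre] at this
    simpa [sub_eq_add_neg] using this
  have h6 : (1 - ε/4) * t ≤ (1-β)^k * t := by
    apply mul_le_mul_of_nonneg_right _ htpos.le
    linarith
  -- the heavy-voter term
  have hdq1 : (d:ℚ)*q ≤ (3/2)*r^d := by
    have hh1 : (d*q : ℕ) ≤ n * (n-1)^(d-1) := d_mul_choose_le n d hn1 hd1n
    have hh2 : ((d:ℚ))*(q:ℚ) ≤ (n:ℚ) * (((n-1:ℕ):ℚ))^(d-1) := by exact_mod_cast hh1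
    have hn1c : ((n-1:ℕ):ℚ) = (n:ℚ) - 1 := by
      rw [Nat.cast_sub hn1, Nat.cast_one]
    have hh3 : ((n-1:ℕ):ℚ) ≤ r := by rw [hn1c]; linarith
    have hh4 : (((n-1:ℕ):ℚ))^(d-1) ≤ r^(d-1) :=
      pow_le_pow_left₀ (Nat.cast_nonneg _) hh3 _
    have hh5 : (n:ℚ) * (((n-1:ℕ):ℚ))^(d-1) ≤ (r+1) * r^(d-1) := by
      apply mul_le_mul (by linarith) hh4 (by positivity) (by linarith)
    have hpowsplit : r^(d-1) * r = r^d := by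
      rw [← pow_succ]
      congr 1
      omega
    have hh6 : (r+1) * r^(d-1) ≤ (3/2) * r^d := by
      have hp : (0:ℚ) < r^(d-1) := pow_pos hr0 _
      nlinarith
    linarith
  have hheavy : (k:ℚ) * Hq ≤ (3/4) * ε * t := by
    rw [hHq]
    exact heavy_bound k d q r ε t hrkpos hε0 hdq1 hdq hkq hr0 ht
  have hbH : (b:ℚ)*Hq ≤ (k:ℚ)*Hq := by
    have : (b:ℚ) ≤ (k:ℚ) := by exact_mod_cast hbk
    exact mul_le_mul_of_nonneg_right this hH0
  have hfin : (1-β)^b * sco A lam O - (b:ℚ)*Hq ≤ sco A lam S' := hsco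
  linarith [h5, h6, hheavy, hbH, hfin]
end

section
/- Let P = (C, V, A, Λ) and P' = (C, V', A', Λ') be approval profiles over the same candidate set C with nonnegative OWA vectors, with score functions sco and sco', and assume |C| ≥ k. Let OPT_k = max{sco(X) : X ⊆ C, |X| = k} and OPT'_k = max{sco'(X) : X ⊆ C, |X| = k}. Let s > 0, h ≥ 0, δ ≥ 0 and β ∈ (0, 1] be rationals, and suppose |sco(X) − s·sco'(X) − h| ≤ δ·OPT_k for every X ⊆ C with |X| = k. Then every Y ⊆ C with |Y| = k and sco'(Y) ≥ β·OPT'_k satisfies sco(Y) ≥ (β − 2δ)·OPT_k. -/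
/-!
Write `f = sco`, `g = sco'`, `M = OPT_k`, `M' = OPT'_k`, `ε = δ·OPT_k`, and compare an optimum `X`
of `f` with `y = Y`: `f X ≤ s · g X + h + ε ≤ s · M' + h + ε`, while `f y ≥ s · g y + h - ε ≥ s β M' + h - ε`.
Eliminating `s M'` leaves `f y ≥ β M + (1 - β) h - (1 + β) ε`, and `h ≥ 0`, `β ≤ 1`, `ε ≥ 0` bring this
down to `β M - 2 ε`.
-/

open Finset

section AffineApproximation

variable {α K : Type*} [Field K] [LinearOrder K] [IsStrictOrderedRing K]
  {f g : α → K} {F : Set α} {s h ε : K}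

theorem IsGreatest.le_mul_add_add_of_abs_sub_le {M M' : K} (hM : IsGreatest (f '' F) M)
    (hM' : IsGreatest (g '' F) M') (hs : 0 ≤ s)
    (happrox : ∀ x ∈ F, |f x - s * g x - h| ≤ ε) :
    M ≤ s * M' + h + ε := by
  obtain ⟨⟨x, hx, rfl⟩, -⟩ := hM
  have hgx : g x ≤ M' := hM'.2 ⟨x, hx, rfl⟩
  linarith [(abs_le.mp (happrox x hx)).2, mul_le_mul_of_nonneg_left hgx hs]

theorem IsGreatest.mul_sub_two_mul_le_of_abs_sub_le {M M' β : K} (hM : IsGreatest (f '' F) M)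
    (hM' : IsGreatest (g '' F) M') (hs : 0 ≤ s) (hh : 0 ≤ h) (hβ0 : 0 ≤ β) (hβ1 : β ≤ 1)
    (happrox : ∀ x ∈ F, |f x - s * g x - h| ≤ ε) {y : α} (hy : y ∈ F) (hgy : β * M' ≤ g y) :
    β * M - 2 * ε ≤ f y := by
  have hMle := hM.le_mul_add_add_of_abs_sub_le hM' hs happrox
  have hε : 0 ≤ ε := (abs_nonneg _).trans (happrox y hy)
  have hfy := (abs_le.mp (happrox y hy)).1
  have hsg : s * (β * M') ≤ s * g y := mul_le_mul_of_nonneg_left hgy hs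
  calc β * M - 2 * ε ≤ β * (s * M' + h + ε) + (1 - β) * h - 2 * ε := by
        linarith [mul_le_mul_of_nonneg_left hMle hβ0, mul_nonneg (sub_nonneg.mpr hβ1) hh]
    _ ≤ s * g y + h - ε := by linarith [mul_nonneg (sub_nonneg.mpr hβ1) hε]
    _ ≤ f y := by linarith

end AffineApproximation

theorem stmt_8_general {C V V' : Type*} [Fintype V] [Fintype V'] [DecidableEq C]
    (A : V → Finset C) (lam : V → ℕ → ℚ)
    (A' : V' → Finset C) (lam' : V' → ℕ → ℚ)
    (k : ℕ)
    (OPT OPT' : ℚ)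
    (hOPT : IsGreatest {x : ℚ | ∃ X : Finset C, X.card = k ∧ sco A lam X = x} OPT)
    (hOPT' : IsGreatest {x : ℚ | ∃ X : Finset C, X.card = k ∧ sco A' lam' X = x} OPT')
    (s h δ β : ℚ) (hs : 0 < s) (hh : 0 ≤ h) (hβ0 : 0 < β) (hβ1 : β ≤ 1)
    (happrox : ∀ X : Finset C, X.card = k →
      |sco A lam X - s * sco A' lam' X - h| ≤ δ * OPT)
    (Y : Finset C) (hY : Y.card = k) (hYsc : β * OPT' ≤ sco A' lam' Y) :
    (β - 2 * δ) * OPT ≤ sco A lam Y := by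
  have key := IsGreatest.mul_sub_two_mul_le_of_abs_sub_le (F := {X : Finset C | X.card = k})
    hOPT hOPT' hs.le hh hβ0.le hβ1 happrox hY hYsc
  linarith

/-- Voter-reduction preprocessing: if `|sco X - s·sco' X - h| ≤ δ·OPT` for every size-`k`
committee `X`, then every `β`-approximate solution of the reduced profile is a
`(β - 2δ)`-approximate solution of the original profile. -/
theorem stmt_8 {C V V' : Type*} [Fintype C] [Fintype V] [Fintype V'] [DecidableEq C]
    (A : V → Finset C) (lam : V → ℕ → ℚ)
    (A' : V' → Finset C) (lam' : V' → ℕ → ℚ)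
    (hnonneg : ∀ (v : V) (j : ℕ), 1 ≤ j → 0 ≤ lam v j)
    (hnonneg' : ∀ (v : V') (j : ℕ), 1 ≤ j → 0 ≤ lam' v j)
    (k : ℕ) (hk : k ≤ Fintype.card C)
    (OPT OPT' : ℚ)
    (hOPT : IsGreatest {x : ℚ | ∃ X : Finset C, X.card = k ∧ sco A lam X = x} OPT)
    (hOPT' : IsGreatest {x : ℚ | ∃ X : Finset C, X.card = k ∧ sco A' lam' X = x} OPT')
    (s h δ β : ℚ) (hs : 0 < s) (hh : 0 ≤ h) (hδ : 0 ≤ δ) (hβ0 : 0 < β) (hβ1 : β ≤ 1)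
    (happrox : ∀ X : Finset C, X.card = k →
      |sco A lam X - s * sco A' lam' X - h| ≤ δ * OPT)
    (Y : Finset C) (hY : Y.card = k) (hYsc : β * OPT' ≤ sco A' lam' Y) :
    (β - 2 * δ) * OPT ≤ sco A lam Y :=
  stmt_8_general A lam A' lam' k OPT OPT' hOPT hOPT' s h δ β hs hh hβ0 hβ1 happrox Y hY hYsc
end

section
/- Let the profile graph of an approval profile be K_{d,d}-free, where d ≥ 1 and |C| = n. Then the number of voters v ∈ V with |A_v| ≥ d is at most (d − 1)·C(n, d), where C(n, d) denotes the binomial coefficient. -/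
open Finset

/-! Every voter approving at least `d` candidates approves some `d`-set of candidates, and in a
`K_{d,d}`-free profile each `d`-set is approved by fewer than `d` voters; summing over the
`C(n, d)` sets gives the bound. -/

section

variable {C V : Type*}

theorem card_filter_le_card_le_sum_card_filter_subset [Fintype C] [DecidableEq C] [DecidableEq V]
    (s : Finset V) (A : V → Finset C) (d : ℕ) :
    #{v ∈ s | d ≤ #(A v)} ≤ ∑ E ∈ univ.powersetCard d, #{v ∈ s | E ⊆ A v} := by
  calc #{v ∈ s | d ≤ #(A v)}
      ≤ #((univ.powersetCard d).biUnion fun E => {v ∈ s | E ⊆ A v}) := by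
        refine card_le_card fun v hv => ?_
        rw [mem_filter] at hv
        obtain ⟨E, hEA, hE⟩ := exists_subset_card_eq hv.2
        exact mem_biUnion.2 ⟨E, mem_powersetCard_univ.2 hE, mem_filter.2 ⟨hv.1, hEA⟩⟩
    _ ≤ ∑ E ∈ univ.powersetCard d, #{v ∈ s | E ⊆ A v} := card_biUnion_le

theorem KddFree.card_filter_subset_lt [DecidableEq C] {A : V → Finset C} {d : ℕ}
    (hfree : KddFree A d) (s : Finset V) {E : Finset C} (hE : #E = d) :
    #{v ∈ s | E ⊆ A v} < d := by
  by_contra! h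
  obtain ⟨D, hD, hDcard⟩ := exists_subset_card_eq h
  exact hfree ⟨D, E, hDcard, hE, fun v hv => (mem_filter.1 (hD hv)).2⟩

end

theorem stmt_9_general {C V : Type*} [Fintype C] [Fintype V]
    (A : V → Finset C) (d : ℕ) (hfree : KddFree A d) :
    (Finset.univ.filter fun v : V => d ≤ (A v).card).card ≤
      (d - 1) * (Fintype.card C).choose d := by
  classical
  have hfew (E : Finset C) (hE : E ∈ univ.powersetCard d) : #{v ∈ univ | E ⊆ A v} ≤ d - 1 :=
    Nat.le_sub_one_of_lt (hfree.card_filter_subset_lt univ (mem_powersetCard_univ.1 hE))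
  calc #{v ∈ univ | d ≤ #(A v)}
      ≤ ∑ E ∈ univ.powersetCard d, #{v ∈ univ | E ⊆ A v} :=
        card_filter_le_card_le_sum_card_filter_subset univ A d
    _ ≤ #(univ.powersetCard d : Finset (Finset C)) • (d - 1) := sum_le_card_nsmul _ _ _ hfew
    _ = (d - 1) * (Fintype.card C).choose d := by
        rw [card_powersetCard, card_univ, smul_eq_mul, mul_comm]

/-- In a `K_{d,d}`-free profile with `n` candidates, the number of voters approving at
least `d` candidates is at most `(d-1)·C(n,d)`. -/
theorem stmt_9 {C V : Type*} [Fintype C] [Fintype V]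
    (A : V → Finset C) (d : ℕ) (hd : 1 ≤ d) (hfree : KddFree A d) :
    (Finset.univ.filter fun v : V => d ≤ (A v).card).card ≤
      (d - 1) * (Fintype.card C).choose d :=
  stmt_9_general A d hfree
end

section
/- Let the profile graph of an approval profile be K_{d,d}-free, where d ≥ 1 and |C| = n. Then the number of distinct approval sets occurring among the voters, |{A_v : v ∈ V}|, is at most (d − 1)·C(n, d) + Σ_{i=0}^{d−1} C(n, i), where C(n, i) denotes the binomial coefficient. -/
/-!
Every approval set of size at least `d` contains some `d`-set `T`, and `K_{d,d}`-freeness leaves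
room for at most `d - 1` distinct approval sets above any given `T`: otherwise `d` of them,
realized by `d` voters, would all contain `T`. Summing over the `C(n, d)` choices of `T` bounds
the large approval sets; the small ones are just subsets of size less than `d`.
-/

open Finset

section FiniteFamilies

variable {α : Type*} [Fintype α] [DecidableEq α]

theorem card_filter_card_lt_le_sum_choose (F : Finset (Finset α)) (d : ℕ) :
    #{S ∈ F | #S < d} ≤ ∑ i ∈ range d, (Fintype.card α).choose i :=
  calc #{S ∈ F | #S < d}
      ≤ #((range d).biUnion fun i ↦ powersetCard i (univ : Finset α)) :=
        card_le_card fun S hS ↦ mem_biUnion.2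
          ⟨#S, mem_range.2 (mem_filter.1 hS).2, mem_powersetCard.2 ⟨subset_univ S, rfl⟩⟩
    _ ≤ ∑ i ∈ range d, #(powersetCard i (univ : Finset α)) := card_biUnion_le
    _ = ∑ i ∈ range d, (Fintype.card α).choose i := by simp only [card_powersetCard, card_univ]

theorem card_filter_le_card_le_choose_mul {F : Finset (Finset α)} {d m : ℕ}
    (h : ∀ T : Finset α, #T = d → #{S ∈ F | T ⊆ S} ≤ m) :
    #{S ∈ F | d ≤ #S} ≤ (Fintype.card α).choose d * m :=
  calc #{S ∈ F | d ≤ #S}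
      ≤ #((powersetCard d (univ : Finset α)).biUnion fun T ↦ {S ∈ F | T ⊆ S}) := by
        refine card_le_card fun S hS ↦ ?_
        obtain ⟨hSF, hdS⟩ := mem_filter.1 hS
        obtain ⟨T, hTS, hT⟩ := exists_subset_card_eq hdS
        exact mem_biUnion.2 ⟨T, mem_powersetCard.2 ⟨subset_univ T, hT⟩, mem_filter.2 ⟨hSF, hTS⟩⟩
    _ ≤ #(powersetCard d (univ : Finset α)) * m :=
        card_biUnion_le_card_mul _ _ _ fun T hT ↦ h T (mem_powersetCard.1 hT).2
    _ = (Fintype.card α).choose d * m := by rw [card_powersetCard, card_univ]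

end FiniteFamilies

namespace KddFree

variable {C V : Type*} [DecidableEq C] {A : V → Finset C} {d : ℕ}

theorem card_filter_superset_lt (hfree : KddFree A d) (s : Finset V) {T : Finset C}
    (hT : #T = d) : #{S ∈ s.image A | T ⊆ S} < d := by
  by_contra! h
  obtain ⟨W, hWsub, hWcard⟩ := exists_subset_card_eq h
  have hsurj : Set.SurjOn A s W := fun S hS ↦ by
    obtain ⟨v, hv, rfl⟩ := mem_image.1 (mem_filter.1 (hWsub hS)).1
    exact ⟨v, hv, rfl⟩
  obtain ⟨D, -, hinj, hDW⟩ := exists_subset_injOn_image_eq_of_surjOn (s : Set V) W hsurj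
  refine hfree ⟨D, T, ?_, hT, fun v hv ↦ ?_⟩
  · rw [← card_image_of_injOn hinj, hDW, hWcard]
  · exact (mem_filter.1 (hWsub (hDW ▸ mem_image_of_mem A hv))).2

theorem card_image_le [Fintype C] (hfree : KddFree A d) (s : Finset V) :
    #(s.image A) ≤
      (d - 1) * (Fintype.card C).choose d + ∑ i ∈ range d, (Fintype.card C).choose i := by
  have hlarge : #{S ∈ s.image A | d ≤ #S} ≤ (Fintype.card C).choose d * (d - 1) :=
    card_filter_le_card_le_choose_mul fun T hT ↦
      Nat.le_sub_one_of_lt (hfree.card_filter_superset_lt s hT)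
  have hsmall := card_filter_card_lt_le_sum_choose (s.image A) d
  rw [← card_filter_add_card_filter_not (fun S ↦ d ≤ #S)]
  simp only [not_le] at hsmall ⊢
  rw [mul_comm]
  exact add_le_add hlarge hsmall

end KddFree

theorem stmt_10_general {C V : Type*} [Fintype C] [Fintype V] [DecidableEq C]
    (A : V → Finset C) (d : ℕ) (hfree : KddFree A d) :
    (Finset.univ.image A).card ≤
      (d - 1) * (Fintype.card C).choose d +
        ∑ i ∈ Finset.range d, (Fintype.card C).choose i :=
  hfree.card_image_le univ

/-- In a `K_{d,d}`-free profile with `n` candidates, the number of distinct approval sets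
among the voters is at most `(d-1)·C(n,d) + ∑_{i=0}^{d-1} C(n,i)`. -/
theorem stmt_10 {C V : Type*} [Fintype C] [Fintype V] [DecidableEq C]
    (A : V → Finset C) (d : ℕ) (hd : 1 ≤ d) (hfree : KddFree A d) :
    (Finset.univ.image A).card ≤
      (d - 1) * (Fintype.card C).choose d +
        ∑ i ∈ Finset.range d, (Fintype.card C).choose i :=
  stmt_10_general A d hfree
end

section
/- Let a, b ≥ 2, ℓ ≥ 1 and w ≥ 2 be integers, and let G = (C, V, E) be a bipartite graph with parts C and V such that: (1) there do not exist a vertices of C and b vertices of V with all a·b edges between them present (G is K_{a,b}-free), (2) every vertex of C has degree at most ℓ, and (3) |C| ≥ a·((w − 1)ℓ)^b. Then C contains a sunflower of size w, i.e. a set T ⊆ C with |T| = w such that N(x) ∩ N(x') is the same set for all distinct x, x' ∈ T. -/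
open Finset

/-- Sunflower lemma for `K_{a,b}`-free bipartite graphs (`N x` is the neighbourhood in `V`
of the vertex `x ∈ C`): if every vertex of `C` has degree at most `ℓ` and
`|C| ≥ a((w-1)ℓ)^b`, then `C` contains a sunflower of size `w`, i.e. `w` vertices whose
pairwise neighbourhood intersections are all equal. -/
theorem stmt_17 {C V : Type*} [Fintype C] [DecidableEq V]
    (N : C → Finset V) (a b ℓ w : ℕ)
    (ha : 2 ≤ a) (hb : 2 ≤ b) (hℓ : 1 ≤ ℓ) (hw : 2 ≤ w)
    (hfree : ¬ ∃ (SC : Finset C) (SV : Finset V),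
      SC.card = a ∧ SV.card = b ∧ ∀ x ∈ SC, SV ⊆ N x)
    (hdeg : ∀ x : C, (N x).card ≤ ℓ)
    (hcard : a * ((w - 1) * ℓ) ^ b ≤ Fintype.card C) :
    ∃ (T : Finset C) (Co : Finset V), T.card = w ∧
      ∀ x ∈ T, ∀ x' ∈ T, x ≠ x' → N x ∩ N x' = Co := by
  classical
  set M := (w - 1) * ℓ with hMdef
  have hM1 : 1 ≤ M := by
    have : 1 ≤ w - 1 := by omega
    calc 1 = 1 * 1 := by ring
    _ ≤ (w - 1) * ℓ := Nat.mul_le_mul this hℓ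
  set CS : Finset V → Finset C := fun Y => univ.filter (fun x => Y ⊆ N x) with hCSdef
  have hmemCS : ∀ (Y : Finset V) (x : C), x ∈ CS Y ↔ Y ⊆ N x := by
    intro Y x; simp [hCSdef]
  -- K_{a,b}-freeness
  have hCSb : ∀ Y : Finset V, Y.card = b → (CS Y).card < a := by
    intro Y hY
    by_contra h
    push_neg at h
    obtain ⟨SC, hSC, hSCcard⟩ := Finset.exists_subset_card_eq h
    exact hfree ⟨SC, Y, hSCcard, hY, fun x hx => (hmemCS Y x).1 (hSC hx)⟩
  have main : ∀ j (Y : Finset V), Y.card + j = b → a * M ^ j ≤ (CS Y).card →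
      ∃ (T : Finset C) (Co : Finset V), T.card = w ∧
        ∀ x ∈ T, ∀ x' ∈ T, x ≠ x' → N x ∩ N x' = Co := by
    intro j
    induction j with
    | zero =>
      intro Y hY hle
      simp only [pow_zero, mul_one] at hle
      exact absurd (hCSb Y (by omega)) (by omega)
    | succ j ih =>
      intro Y hY hle
      by_cases hex : ∃ v ∉ Y, a * M ^ j ≤ (CS (insert v Y)).card
      · obtain ⟨v, hv, hvle⟩ := hex
        exact ih (insert v Y) (by rw [Finset.card_insert_of_notMem hv]; omega) hvle
      · push_neg at hex
        set t := a * M ^ j with htdef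
        have ht2 : 2 ≤ t := by
          have : 1 ≤ M ^ j := Nat.one_le_pow _ _ (by omega)
          calc 2 = 2 * 1 := by ring
          _ ≤ a * M ^ j := Nat.mul_le_mul ha this
        have hmax : ∀ v ∉ Y, (CS (insert v Y)).card ≤ t - 1 := by
          intro v hv; have := hex v hv; omega
        -- bad set bound
        have hbad : ∀ x' ∈ CS Y,
            (insert x' ((CS Y).filter (fun x => Y ⊂ N x ∩ N x'))).card ≤ ℓ * (t - 1) := by
          intro x' hx'
          by_cases hss : N x' ⊆ Y
          · have : (CS Y).filter (fun x => Y ⊂ N x ∩ N x') = ∅ := by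
              apply Finset.filter_eq_empty_iff.2
              intro x hx hlt
              exact absurd ((Finset.inter_subset_right.trans hss)) (fun h => (hlt.2 h).elim)
            rw [this]
            have hone : (insert x' (∅ : Finset C)).card = 1 := by simp
            rw [hone]
            calc 1 = 1 * 1 := by ring
            _ ≤ ℓ * (t - 1) := Nat.mul_le_mul hℓ (by omega)
          · have hsub : insert x' ((CS Y).filter (fun x => Y ⊂ N x ∩ N x')) ⊆
                (N x' \ Y).biUnion (fun v => CS (insert v Y)) := by
              intro x hx
              rcases Finset.mem_insert.1 hx with rfl | hx
              · obtain ⟨v, hvN, hvY⟩ : ∃ v ∈ N x, v ∉ Y := by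
                  by_contra h; push_neg at h; exact hss h
                exact Finset.mem_biUnion.2 ⟨v, Finset.mem_sdiff.2 ⟨hvN, hvY⟩,
                  (hmemCS _ _).2 (Finset.insert_subset hvN ((hmemCS Y x).1 hx'))⟩
              · obtain ⟨hxC, hlt⟩ := Finset.mem_filter.1 hx
                obtain ⟨v, hvmem, hvY⟩ := Finset.exists_of_ssubset hlt
                obtain ⟨hv1, hv2⟩ := Finset.mem_inter.1 hvmem
                exact Finset.mem_biUnion.2 ⟨v, Finset.mem_sdiff.2 ⟨hv2, hvY⟩,
                  (hmemCS _ _).2 (Finset.insert_subset hv1 ((hmemCS Y x).1 hxC))⟩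
            calc (insert x' ((CS Y).filter (fun x => Y ⊂ N x ∩ N x'))).card
                ≤ ((N x' \ Y).biUnion (fun v => CS (insert v Y))).card :=
                  Finset.card_le_card hsub
            _ ≤ (N x' \ Y).card * (t - 1) := Finset.card_biUnion_le_card_mul _ _ _
                (fun v hv => hmax v (Finset.mem_sdiff.1 hv).2)
            _ ≤ ℓ * (t - 1) := Nat.mul_le_mul_right _
                ((Finset.card_le_card Finset.sdiff_subset).trans (hdeg x'))
        -- greedy
        have grow : ∀ k, k ≤ w → ∃ T : Finset C, T ⊆ CS Y ∧ T.card = k ∧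
            ∀ x ∈ T, ∀ x' ∈ T, x ≠ x' → N x ∩ N x' = Y := by
          intro k
          induction k with
          | zero => exact fun _ => ⟨∅, by simp⟩
          | succ k ihk =>
            intro hk
            obtain ⟨T, hTsub, hTcard, hTpair⟩ := ihk (by omega)
            set Bad := T.biUnion (fun x' => insert x' ((CS Y).filter (fun x => Y ⊂ N x ∩ N x')))
              with hBaddef
            have hBadcard : Bad.card < (CS Y).card := by
              have h1 : Bad.card ≤ T.card * (ℓ * (t - 1)) :=
                Finset.card_biUnion_le_card_mul _ _ _ (fun x' hx' => hbad x' (hTsub hx'))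
            
              have h2 : T.card * (ℓ * (t - 1)) ≤ (w - 1) * (ℓ * (t - 1)) :=
                Nat.mul_le_mul_right _ (by omega)
              have h3 : (w - 1) * (ℓ * (t - 1)) < a * M ^ (j + 1) := by
                have he : M * (t - 1) + M * 1 = M * t := by
                  rw [← Nat.mul_add]; congr 1; omega
                have he2 : a * M ^ (j + 1) = M * t := by
                  rw [htdef, pow_succ]; ring
                have he3 : (w - 1) * (ℓ * (t - 1)) = M * (t - 1) := by
                  rw [hMdef]; ring
                omega
              omega
            obtain ⟨x, hxCS, hxBad⟩ : ∃ x ∈ CS Y, x ∉ Bad := by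
              by_contra hcon
              push_neg at hcon
              exact absurd (Finset.card_le_card hcon) (by omega)
            have hxT : x ∉ T := fun h => hxBad (Finset.mem_biUnion.2 ⟨x, h, Finset.mem_insert_self _ _⟩)
            have hkey : ∀ x' ∈ T, N x ∩ N x' = Y := by
              intro x' hx'
              have hnot : ¬ (Y ⊂ N x ∩ N x') := by
                intro hlt
                exact hxBad (Finset.mem_biUnion.2 ⟨x', hx', Finset.mem_insert.2
                  (Or.inr (Finset.mem_filter.2 ⟨hxCS, hlt⟩))⟩)
              have hsub : Y ⊆ N x ∩ N x' :=
                Finset.subset_inter ((hmemCS Y x).1 hxCS) ((hmemCS Y x').1 (hTsub hx'))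
              by_contra hne
              exact hnot (lt_of_le_of_ne hsub (Ne.symm hne))
            refine ⟨insert x T, Finset.insert_subset hxCS hTsub,
              by rw [Finset.card_insert_of_notMem hxT, hTcard], ?_⟩
            intro x1 hx1 x2 hx2 hne
            rcases Finset.mem_insert.1 hx1 with h1 | h1 <;>
              rcases Finset.mem_insert.1 hx2 with h2 | h2
            · exact absurd (h1.trans h2.symm) hne
            · subst h1; exact hkey x2 h2
            · subst h2; rw [Finset.inter_comm]; exact hkey x1 h1
            · exact hTpair x1 h1 x2 h2 hne
        obtain ⟨T, hTsub, hTcard, hTpair⟩ := grow w le_rfl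
        exact ⟨T, Y, hTcard, hTpair⟩
  have h0 : (∅ : Finset V).card + b = b := by simp
  have h1 : a * M ^ b ≤ (CS ∅).card := by
    have : CS ∅ = univ := by simp [hCSdef]
    rw [this, Finset.card_univ]
    exact hcard
  exact main b ∅ h0 h1
end
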